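/- Suppose W : SE(2)\{e} → ℝ is differentiable and satisfies the sub-Riemannian Eikonal equation C(g)⁻¹√(β⁻²|A₁W(g)|² + |A₂W(g)|²) = 1. If γ_b solves the backward ODE γ̇_b(t) = −(A₁W)(γ_b(t))/(β C(γ_b(t)))² · A₁|_{γ_b(t)} − (A₂W)(γ_b(t))/C(γ_b(t))² · A₂|_{γ_b(t)}, then (d/dt) W(γ_b(t)) = −1, i.e. W decreases at unit rate along γ_b; moreover γ_b is horizontal and has unit sub-Riemannian speed: G^C|_{γ_b(t)}(γ̇_b(t), γ̇_b(t)) = 1. -/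

import Mathlib

/-- SE(2) modeled as ℝ³ with coordinates (x, y, θ); identity e = (0,0,0). -/
abbrev SE2 : Type := ℝ × ℝ × ℝ

noncomputable def se2e : SE2 := (0, 0, 0)

/-- A₁ = cos θ ∂ₓ + sin θ ∂_y. -/
noncomputable def A1 (g : SE2) : SE2 := (Real.cos g.2.2, Real.sin g.2.2, 0)

/-- A₂ = ∂_θ. -/
noncomputable def A2 (_ : SE2) : SE2 := (0, 0, 1)

/-- The horizontal derivative AᵢW(g) of a function W along Aᵢ. -/
noncomputable def A1W (W : SE2 → ℝ) (g : SE2) : ℝ := fderiv ℝ W g (A1 g)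
noncomputable def A2W (W : SE2 → ℝ) (g : SE2) : ℝ := fderiv ℝ W g (A2 g)

/-- The backward-tracking velocity field
−(A₁W)/(βC)² · A₁ − (A₂W)/C² · A₂. -/
noncomputable def backVel (W : SE2 → ℝ) (C : SE2 → ℝ) (β : ℝ) (g : SE2) : SE2 :=
  (-(A1W W g) / (β * C g) ^ 2) • A1 g + (-(A2W W g) / (C g) ^ 2) • A2 g

/-- if W solves the SR eikonal equation
C(g)⁻¹√(β⁻²|A₁W|² + |A₂W|²) = 1 away from e, and γ_b solves the backward ODE,
then W decreases at unit rate along γ_b, γ_b is horizontal, and γ_b has unit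
sub-Riemannian speed G^C(γ̇_b, γ̇_b) = 1. -/
theorem backtracking_unit_speed (W : SE2 → ℝ) (C : SE2 → ℝ) (β δ : ℝ)
    (hβ : 0 < β) (hδ : 0 < δ) (hC : ∀ g, δ ≤ C g ∧ C g ≤ 1)
    (hCsm : ContDiff ℝ (⊤ : ℕ∞) C)
    (hWdiff : ∀ g : SE2, g ≠ se2e → DifferentiableAt ℝ W g)
    (heik : ∀ g : SE2, g ≠ se2e →
      (C g)⁻¹ * Real.sqrt ((β ^ 2)⁻¹ * (A1W W g) ^ 2 + (A2W W g) ^ 2) = 1)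
    (γb : ℝ → SE2) (hne : ∀ t, γb t ≠ se2e)
    (hode : ∀ t, HasDerivAt γb (backVel W C β (γb t)) t) :
    ∀ t : ℝ,
      HasDerivAt (fun s => W (γb s)) (-1) t ∧
      (∃ a b : ℝ, backVel W C β (γb t) = a • A1 (γb t) + b • A2 (γb t)) ∧
      (C (γb t)) ^ 2 *
          (β ^ 2 * (-(A1W W (γb t)) / (β * C (γb t)) ^ 2) ^ 2 +
            (-(A2W W (γb t)) / (C (γb t)) ^ 2) ^ 2) = 1 := by
  intro t
  set g := γb t with hg
  have hcpos : 0 < C g := lt_of_lt_of_le hδ (hC g).1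
  have hc0 : C g ≠ 0 := ne_of_gt hcpos
  have hb0 : β ≠ 0 := ne_of_gt hβ
  set u := A1W W g with hu
  set v := A2W W g with hv
  -- key identity from the eikonal equation
  have hS : (0:ℝ) ≤ (β ^ 2)⁻¹ * u ^ 2 + v ^ 2 := by positivity
  have hsq : Real.sqrt ((β ^ 2)⁻¹ * u ^ 2 + v ^ 2) = C g := by
    have h := heik g (hne t)
    rw [inv_mul_eq_one₀ hc0] at h
    exact h.symm
  have key : (β ^ 2)⁻¹ * u ^ 2 + v ^ 2 = (C g) ^ 2 := by
    have := congrArg (fun x => x ^ 2) hsq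
    simpa [Real.sq_sqrt hS] using this
  have key2 : u ^ 2 + β ^ 2 * v ^ 2 = β ^ 2 * (C g) ^ 2 := by
    field_simp at key
    linarith
  have hWd : DifferentiableAt ℝ W g := hWdiff g (hne t)
  -- derivative computation
  have hval : fderiv ℝ W g (backVel W C β g) = -1 := by
    have h1 : fderiv ℝ W g (backVel W C β g)
        = (-u / (β * C g) ^ 2) * u + (-v / (C g) ^ 2) * v := by
      simp [backVel, map_add, map_smul, smul_eq_mul, hu, hv, A1W, A2W]
    rw [h1]
    field_simp
    linear_combination (-1 : ℝ) * key2
  refine ⟨?_, ⟨_, _, rfl⟩, ?_⟩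
  · have h2 := hWd.hasFDerivAt.comp_hasDerivAt t (hode t)
    rw [← hg] at h2
    have h3 : HasDerivAt (W ∘ γb) (-1) t := by simpa [hval] using h2
    exact h3
  · have e3 : (C g) ^ 2 * (β ^ 2 * (-u / (β * C g) ^ 2) ^ 2 + (-v / (C g) ^ 2) ^ 2)
        = (u ^ 2 + β ^ 2 * v ^ 2) / (β ^ 2 * (C g) ^ 2) := by
      field_simp
    rw [e3, key2]
    field_simp
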